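/- arXiv:1711.06532 — 4 statements merged into one kernel-verified Lean document; each statement's English description precedes it below -/
import Mathlib

section
/- Every stable 2-coloring of pairs f : [ω]² → 2 that has an infinite increasing p-homogeneous set also has an infinite homogeneous set. -/
/-- Every stable 2-coloring of pairs with an infinite increasing p-homogeneous set has an
infinite homogeneous set. -/
theorem increasing_phomogeneous_implies_homogeneous
    (f : ℕ → ℕ → Fin 2)
    (hstable : ∀ x : ℕ, ∃ j : Fin 2, ∃ N : ℕ, ∀ u, N ≤ u → f x u = j)
    (I₀ I₁ : Set ℕ) (h0 : I₀.Infinite) (h1 : I₁.Infinite)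
    (hphom : ∃ c : Fin 2, ∀ x ∈ I₀, ∀ y ∈ I₁, x < y → f x y = c) :
    ∃ H : Set ℕ, H.Infinite ∧ ∃ c : Fin 2, ∀ x ∈ H, ∀ y ∈ H, x < y → f x y = c := by
  obtain ⟨c, hc⟩ := hphom
  -- every x ∈ I₀ has limit c
  have key : ∀ x ∈ I₀, ∃ N : ℕ, ∀ u, N ≤ u → f x u = c := by
    intro x hx
    obtain ⟨j, N, hN⟩ := hstable x
    obtain ⟨y, hy, hygt⟩ := h1.exists_gt (max x N)
    have h1' : f x y = c := hc x hx y hy (lt_of_le_of_lt (le_max_left _ _) hygt)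
    have h2' : f x y = j := hN y (le_of_lt (lt_of_le_of_lt (le_max_right _ _) hygt))
    refine ⟨N, fun u hu => ?_⟩
    rw [hN u hu, ← h2', h1']
  classical
  -- threshold function
  choose! N hNspec using key
  -- next element of I₀ above k
  have hnext : ∀ k : ℕ, ∃ m, m ∈ I₀ ∧ k < m := fun k => by
    obtain ⟨m, hm, hk⟩ := h0.exists_gt k; exact ⟨m, hm, hk⟩
  choose next hnextI hnextgt using hnext
  -- build the sequence
  let a : ℕ → ℕ := fun n => Nat.rec (next 0) (fun _ p => next (max p (N p))) n
  have ha0 : a 0 ∈ I₀ := hnextI 0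
  have hastep : ∀ n, a (n + 1) = next (max (a n) (N (a n))) := fun n => rfl
  have haI : ∀ n, a n ∈ I₀ := by
    intro n; cases n with
    | zero => exact ha0
    | succ n => rw [hastep]; exact hnextI _
  have hamono : StrictMono a := by
    apply strictMono_nat_of_lt_succ
    intro n
    exact lt_of_le_of_lt (le_max_left _ _) (hnextgt _)
  have haN : ∀ n, N (a n) < a (n + 1) := fun n =>
    lt_of_le_of_lt (le_max_right _ _) (hnextgt _)
  refine ⟨Set.range a, Set.infinite_range_of_injective hamono.injective, c, ?_⟩
  rintro x ⟨m, rfl⟩ y ⟨n, rfl⟩ hxy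
  have hmn : m < n := hamono.lt_iff_lt.mp hxy
  have : N (a m) ≤ a n := le_of_lt (lt_of_lt_of_le (haN m) (hamono.monotone hmn))
  exact hNspec (a m) (haI m) (a n) this
end

section
/- With f as defined from the least modulus μ of a c.e. approximation {X_s} of ∅′ (f(x,y) = 0 iff y − x ≤ max{μ(z) : z ≤ x}), suppose H_L, H_R are infinite sets such that f(x,y) = 1 whenever x ∈ H_L, y ∈ H_R, x < y. Then for any z ∈ ω: taking the least x ∈ H_L with z ≤ x and the least y ∈ H_R with y > x, we have y − x > μ(z), and hence z ∈ ∅′ if and only if z ∈ X_{y−x}. Consequently ∅′ is computable from H_L ⊕ H_R. -/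
open Classical in
noncomputable def chr (A : Set ℕ) : ℕ →. ℕ :=
  fun n => Part.some (if n ∈ A then 1 else 0)

/-- The effective join (recursive union) of two sets: `A ⊕ B`. -/
def setJoin (A B : Set ℕ) : Set ℕ :=
  {n | (n % 2 = 0 ∧ n / 2 ∈ A) ∨ (n % 2 = 1 ∧ n / 2 ∈ B)}

/-- Codes for partial recursive functions relative to an oracle. -/
inductive OCode : Type
  | zero | succ | left | right | oracle
  | pair (a b : OCode) | comp (a b : OCode)
  | prec (a b : OCode) | rfind' (a : OCode)

/-- Evaluation of an oracle code relative to oracle `O`. -/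
def OCode.eval (O : ℕ →. ℕ) : OCode → ℕ →. ℕ
  | .zero => pure 0
  | .succ => Nat.succ
  | .left => fun n : ℕ => n.unpair.1
  | .right => fun n : ℕ => n.unpair.2
  | .oracle => O
  | .pair cf cg => fun n => Nat.pair <$> eval O cf n <*> eval O cg n
  | .comp cf cg => fun n => eval O cg n >>= eval O cf
  | .prec cf cg =>
    Nat.unpaired fun a n =>
      n.rec (eval O cf a) fun y IH => do
        let i ← IH
        eval O cg (Nat.pair a (Nat.pair y i))
  | .rfind' cf =>
    Nat.unpaired fun a m =>
      (Nat.rfind fun n => (fun m => m = 0) <$> eval O cf (Nat.pair a (n + m))).map (· + m)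

/-- `g` is partial recursive in the oracle `O`. -/
def RecIn (O g : ℕ →. ℕ) : Prop := ∃ c : OCode, OCode.eval O c = g

/-- Turing reducibility between sets of naturals. -/
def TuringLE (A B : Set ℕ) : Prop := RecIn (chr B) (chr A)

/-- The halting set `∅′`. -/
def K : Set ℕ := {n | ((Denumerable.ofNat Nat.Partrec.Code n).eval n).Dom}

/-!
Given `z`, let `x` be the least element of `H_L` with `z ≤ x` and `y` the least element of `H_R`
above `x`. As `f x y = 1`, the gap `y - x` exceeds `max {μ z' | z' ≤ x} ≥ μ z`; the approximation
is correct on `z` from stage `μ z` on, so `z ∈ ∅′ ↔ z ∈ X (y - x)`. Both least elements are found by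
unbounded search with oracle `H_L ⊕ H_R`, which terminates because `H_L` and `H_R` are infinite.
-/

theorem RecIn.of_recursiveIn {O g : ℕ →. ℕ} (h : Nat.RecursiveIn {O} g) : RecIn O g := by
  induction h with
  | zero => exact ⟨.zero, rfl⟩
  | succ => exact ⟨.succ, rfl⟩
  | left => exact ⟨.left, rfl⟩
  | right => exact ⟨.right, rfl⟩
  | oracle g hg => exact ⟨.oracle, (Set.mem_singleton_iff.1 hg).symm⟩
  | pair _ _ ihf ihh =>
    obtain ⟨cf, rfl⟩ := ihf
    obtain ⟨ch, rfl⟩ := ihh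
    exact ⟨.pair cf ch, rfl⟩
  | comp _ _ ihf ihh =>
    obtain ⟨cf, rfl⟩ := ihf
    obtain ⟨ch, rfl⟩ := ihh
    exact ⟨.comp cf ch, rfl⟩
  | prec _ _ ihf ihh =>
    obtain ⟨cf, rfl⟩ := ihf
    obtain ⟨ch, rfl⟩ := ihh
    exact ⟨.prec cf ch, rfl⟩
  | rfind _ ihf =>
    obtain ⟨cf, rfl⟩ := ihf
    -- `rfind'` searches upwards from the offset in the second component of its input; pairing the
    -- input with the offset `0` gives `rfind`
    refine ⟨.comp (.rfind' cf) (.pair (.pair .left .right) .zero), funext fun n => ?_⟩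
    simp [OCode.eval, Seq.seq, pure, PFun.pure, Part.map_id']

namespace Nat.RecursiveIn

variable {O : Set (ℕ →. ℕ)} {f g : ℕ → ℕ}

theorem of_computable (hf : Computable f) : Nat.RecursiveIn O f :=
  Nat.Partrec.recursiveIn (Partrec.nat_iff.1 hf)

theorem comp_total (hf : Nat.RecursiveIn O f) (hg : Nat.RecursiveIn O g) :
    Nat.RecursiveIn O ↑(f ∘ g) :=
  (hf.comp hg).of_eq fun n => Part.bind_some (g n) (f : ℕ →. ℕ)

theorem pair_total (hf : Nat.RecursiveIn O f) (hg : Nat.RecursiveIn O g) :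
    Nat.RecursiveIn O ↑(fun n => Nat.pair (f n) (g n)) :=
  (hf.pair hg).of_eq fun n => by simp [PFun.coe_val, Seq.seq]

theorem comp₂_total {h : ℕ → ℕ → ℕ} (hh : Computable₂ h) (hf : Nat.RecursiveIn O f)
    (hg : Nat.RecursiveIn O g) : Nat.RecursiveIn O ↑(fun n => h (f n) (g n)) := by
  have hunpaired : Computable fun p : ℕ => h p.unpair.1 p.unpair.2 :=
    hh.comp (Computable.fst.comp Computable.unpair) (Computable.snd.comp Computable.unpair)
  exact ((of_computable hunpaired).comp_total (hf.pair_total hg)).of_eq fun n => by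
    simp [Function.comp_def]

open Classical in
theorem sInf_setOf {p : ℕ → ℕ → Prop}
    (hp : Nat.RecursiveIn O ↑(fun m => if p m.unpair.1 m.unpair.2 then 0 else 1 : ℕ → ℕ))
    (hex : ∀ a, ∃ n, p a n) : Nat.RecursiveIn O ↑(fun a => sInf {n | p a n}) :=
  hp.rfind.of_eq fun a => by
    rw [PFun.coe_val, Part.eq_some_iff]
    refine Nat.mem_rfind.2 ⟨by simpa using Nat.sInf_mem (s := {n | p a n}) (hex a), fun hlt => ?_⟩
    simpa using Nat.notMem_of_lt_sInf hlt

end Nat.RecursiveIn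

section Join

variable {A B : Set ℕ} {n : ℕ}

theorem two_mul_mem_setJoin : 2 * n ∈ setJoin A B ↔ n ∈ A := by
  simp [setJoin]

theorem two_mul_add_one_mem_setJoin : 2 * n + 1 ∈ setJoin A B ↔ n ∈ B := by
  simp [setJoin, Nat.add_mod, Nat.mul_add_div]

theorem manyOneReducible_left_setJoin : ManyOneReducible (· ∈ A) (· ∈ setJoin A B) :=
  ⟨(2 * ·), (Primrec.nat_mul.comp (Primrec.const 2) Primrec.id).to_comp,
    fun _ => two_mul_mem_setJoin.symm⟩

theorem manyOneReducible_right_setJoin : ManyOneReducible (· ∈ B) (· ∈ setJoin A B) :=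
  ⟨(2 * · + 1), (Primrec.succ.comp (Primrec.nat_mul.comp (Primrec.const 2) Primrec.id)).to_comp,
    fun _ => two_mul_add_one_mem_setJoin.symm⟩

end Join

open Classical in
theorem recursiveIn_sInf_ge_of_manyOneReducible {A B : Set ℕ}
    (hAB : ManyOneReducible (· ∈ A) (· ∈ B)) (hA : A.Infinite) :
    Nat.RecursiveIn {chr B} ↑(fun a => sInf {x ∈ A | a ≤ x} : ℕ → ℕ) := by
  obtain ⟨e, he, hAB⟩ := hAB
  have hchr : Nat.RecursiveIn {chr B} ↑(fun n => if n ∈ B then 1 else 0 : ℕ → ℕ) :=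
    .oracle _ rfl
  have htest : Computable₂ fun m v : ℕ => if m.unpair.1 ≤ m.unpair.2 ∧ v = 1 then 0 else 1 :=
    (Primrec.ite (PrimrecPred.and
      (Primrec.nat_le.comp (Primrec.fst.comp (Primrec.unpair.comp Primrec.fst))
        (Primrec.snd.comp (Primrec.unpair.comp Primrec.fst)))
      (Primrec.eq.comp Primrec.snd (Primrec.const 1))) (Primrec.const 0) (Primrec.const 1)).to_comp
  have hquery : Computable fun m : ℕ => e m.unpair.2 :=
    he.comp (Computable.snd.comp Computable.unpair)
  have hp := Nat.RecursiveIn.comp₂_total htest (Nat.RecursiveIn.of_computable Computable.id)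
    (hchr.comp_total (Nat.RecursiveIn.of_computable hquery))
  refine (Nat.RecursiveIn.sInf_setOf (p := fun a x => a ≤ x ∧ e x ∈ B) (hp.of_eq fun m => ?_)
    fun a => ?_).of_eq fun a => ?_
  · by_cases h : e m.unpair.2 ∈ B <;> simp [h]
  · obtain ⟨x, hx, hax⟩ := hA.exists_gt a
    exact ⟨x, hax.le, (hAB x).1 hx⟩
  · simp only [hAB, and_comm]

section Approximation

variable {X : ℕ → ℕ → Bool}

theorem approx_true_of_le (hmono : ∀ s n, X s n = true → X (s + 1) n = true) {s t n : ℕ}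
    (hst : s ≤ t) (h : X s n = true) : X t n = true := by
  induction hst with
  | refl => exact h
  | step _ ih => exact hmono _ _ ih

theorem mem_iff_approx_of_stage_le {A : Set ℕ} (hmono : ∀ s n, X s n = true → X (s + 1) n = true)
    (hunion : ∀ n, n ∈ A ↔ ∃ s, X s n = true) {z s t : ℕ} (hs : X s z = true ↔ z ∈ A)
    (hst : s ≤ t) : z ∈ A ↔ X t z = true :=
  ⟨fun hz => approx_true_of_le hmono hst (hs.2 hz), fun ht => (hunion z).2 ⟨t, ht⟩⟩

end Approximation

theorem lt_sub_of_color_one {μ : ℕ → ℕ} {f : ℕ → ℕ → Fin 2}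
    (hf : ∀ x y, x < y → (f x y = 0 ↔ y - x ≤ (Finset.range (x + 1)).sup μ))
    {x y z : ℕ} (hxy : x < y) (hcolor : f x y = 1) (hzx : z ≤ x) : μ z < y - x :=
  calc μ z ≤ (Finset.range (x + 1)).sup μ := Finset.le_sup (Finset.mem_range_succ_iff.2 hzx)
    _ < y - x := not_le.1 fun hle => absurd ((hf x y hxy).2 hle) (by simp [hcolor])

/-- From any increasing p-homogeneous set with color `1` for the modulus coloring one can
decode `∅′`; consequently `∅′` is computable from `H_L ⊕ H_R`. -/
theorem modulus_coloring_decodes_halting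
    (X : ℕ → ℕ → Bool) (hXcomp : Computable₂ X)
    (hmono : ∀ s n, X s n = true → X (s + 1) n = true)
    (hunion : ∀ n, n ∈ K ↔ ∃ s, X s n = true)
    (μ : ℕ → ℕ)
    (hμ : ∀ z, (∀ w ≤ z, (X (μ z) w = true ↔ w ∈ K)) ∧
      ∀ s < μ z, ¬ (∀ w ≤ z, (X s w = true ↔ w ∈ K)))
    (f : ℕ → ℕ → Fin 2)
    (hf : ∀ x y, x < y →
      (f x y = 0 ↔ y - x ≤ (Finset.range (x + 1)).sup μ))
    (HL HR : Set ℕ) (hL : HL.Infinite) (hR : HR.Infinite)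
    (hphom : ∀ x ∈ HL, ∀ y ∈ HR, x < y → f x y = 1) :
    (∀ z : ℕ,
      μ z < sInf {y ∈ HR | sInf {x ∈ HL | z ≤ x} < y} - sInf {x ∈ HL | z ≤ x} ∧
      (z ∈ K ↔
        X (sInf {y ∈ HR | sInf {x ∈ HL | z ≤ x} < y} - sInf {x ∈ HL | z ≤ x}) z = true)) ∧
    TuringLE K (setJoin HL HR) := by
  set x₀ : ℕ → ℕ := fun z => sInf {x ∈ HL | z ≤ x}
  set y₀ : ℕ → ℕ := fun z => sInf {y ∈ HR | x₀ z < y}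
  have hx₀ (z : ℕ) : x₀ z ∈ HL ∧ z ≤ x₀ z :=
    Nat.sInf_mem (s := {x ∈ HL | z ≤ x}) <| (hL.exists_gt z).imp fun _ h => ⟨h.1, h.2.le⟩
  have hy₀ (z : ℕ) : y₀ z ∈ HR ∧ x₀ z < y₀ z :=
    Nat.sInf_mem (s := {y ∈ HR | x₀ z < y}) <| hR.exists_gt (x₀ z)
  have hgap (z : ℕ) : μ z < y₀ z - x₀ z :=
    lt_sub_of_color_one hf (hy₀ z).2 (hphom _ (hx₀ z).1 _ (hy₀ z).1 (hy₀ z).2) (hx₀ z).2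
  have hdecode (z : ℕ) : z ∈ K ↔ X (y₀ z - x₀ z) z = true :=
    mem_iff_approx_of_stage_le hmono hunion ((hμ z).1 z le_rfl) (hgap z).le
  refine ⟨fun z => ⟨hgap z, hdecode z⟩, RecIn.of_recursiveIn ?_⟩
  have hx₀_rec : Nat.RecursiveIn {chr (setJoin HL HR)} x₀ :=
    recursiveIn_sInf_ge_of_manyOneReducible manyOneReducible_left_setJoin hL
  have hy₀_rec : Nat.RecursiveIn {chr (setJoin HL HR)} y₀ :=
    (recursiveIn_sInf_ge_of_manyOneReducible manyOneReducible_right_setJoin hR).comp_total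
      (Nat.RecursiveIn.comp_total (.of_computable Computable.succ) hx₀_rec)
  have hdecoder : Computable₂ fun d z => bif X d z then 1 else 0 :=
    Computable.cond hXcomp (Computable.const 1) (Computable.const 0)
  refine (Nat.RecursiveIn.comp₂_total hdecoder
    (Nat.RecursiveIn.comp₂_total Primrec.nat_sub.to_comp hy₀_rec hx₀_rec)
    (.of_computable Computable.id)).of_eq fun z => ?_
  simp [chr, hdecode z]
end

section
/- D²₂ ≤_sW SIPT²₂ via the identity forward functional: for any stable 2-coloring f, if (I₀, I₁) is an infinite increasing p-homogeneous set for f, then I₀ itself is an infinite limit homogeneous set for f. -/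
def idCode : OCode := .pair .left .right

lemma eval_comp (O : ℕ →. ℕ) (a b : OCode) (n : ℕ) :
    OCode.eval O (.comp a b) n = (OCode.eval O b n).bind (OCode.eval O a) := rfl

lemma idCode_eval (O : ℕ →. ℕ) (n : ℕ) : OCode.eval O idCode n = Part.some n := by
  simp [idCode, OCode.eval, Seq.seq]

def cg : OCode := .comp .succ (.comp .succ (.comp .right .right))

def prc : OCode := .prec .zero cg

def doubleCode : OCode := .comp prc (.pair idCode idCode)

lemma prc_eval (O : ℕ →. ℕ) (a m : ℕ) :
    OCode.eval O prc (Nat.pair a m) = Part.some (2 * m) := by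
  induction m with
  | zero => simp [prc, OCode.eval, pure, PFun.pure]
  | succ k ih =>
    simp only [prc, cg, OCode.eval, Nat.unpaired, Nat.unpair_pair] at ih ⊢
    rw [ih]
    simp [Nat.unpair_pair]
    change ((Part.some (2 * k)).bind (fun n => Part.some (Nat.succ n))).bind (fun n => Part.some (Nat.succ n)) = _
    simp only [Part.bind_some]
    congr 1

lemma doubleCode_eval (O : ℕ →. ℕ) (n : ℕ) : OCode.eval O doubleCode n = Part.some (2 * n) := by
  rw [doubleCode, eval_comp,
    show OCode.eval O (.pair idCode idCode) n = Part.some (Nat.pair n n) by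
      simp [OCode.eval, idCode_eval, Seq.seq],
    ]
  exact (Part.bind_some _ _).trans (prc_eval O n n)

/-- The left column of an infinite increasing p-homogeneous set for a stable coloring is
itself limit homogeneous, and is trivially computable from the solution; this gives
`D²₂ ≤ₛW SIPT²₂` via the identity forward functional. -/
theorem left_column_limit_homogeneous_and_computable
    (f : ℕ → ℕ → Fin 2)
    (hstable : ∀ x : ℕ, ∃ j : Fin 2, ∃ N : ℕ, ∀ u, N ≤ u → f x u = j)
    (I₀ I₁ : Set ℕ) (h0 : I₀.Infinite) (h1 : I₁.Infinite)
    (hphom : ∃ c : Fin 2, ∀ x ∈ I₀, ∀ y ∈ I₁, x < y → f x y = c) :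
    (∃ j : Fin 2, ∀ x ∈ I₀, ∃ N : ℕ, ∀ u, N ≤ u → f x u = j) ∧
    TuringLE I₀ (setJoin I₀ I₁) := by
  obtain ⟨c, hc⟩ := hphom
  constructor
  · refine ⟨c, fun x hx => ?_⟩
    obtain ⟨j, N, hN⟩ := hstable x
    obtain ⟨y, hy1, hy2⟩ := h1.exists_gt (max N x)
    have hjc : j = c := by
      have h1' : f x y = j := hN y (le_trans (le_max_left _ _) hy2.le)
      have h2' : f x y = c := hc x hx y hy1 (lt_of_le_of_lt (le_max_right _ _) hy2)
      rw [h1'] at h2'; exact h2'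
    exact ⟨N, fun u hu => hjc ▸ hN u hu⟩
  · refine ⟨.comp .oracle doubleCode, ?_⟩
    funext n
    rw [show OCode.eval (chr (setJoin I₀ I₁)) (.comp .oracle doubleCode) n
        = (OCode.eval (chr (setJoin I₀ I₁)) doubleCode n).bind (chr (setJoin I₀ I₁)) from rfl,
      doubleCode_eval]
    refine (Part.bind_some _ _).trans ?_
    have : (2 * n) ∈ setJoin I₀ I₁ ↔ n ∈ I₀ := by
      simp [setJoin, Nat.mul_div_cancel_left n (by norm_num : 0 < 2), Nat.mul_mod_right]
    simp only [chr]
    rw [propext this]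
end

section
/- If a stable 2-coloring f : [ω]² → 2 has an infinite p-homogeneous set H = H_L ⊕ H_R, then f ⊕ H computes an infinite homogeneous set for f; in particular, if some oracle X with f ≤_T X computes a p-homogeneous set for f, then X computes a homogeneous set for f. -/
open Classical in
/-- The oracle coding the join of a coloring `f` with a set `A`. -/
noncomputable def colorJoinOracle (f : ℕ → ℕ → Fin 2) (A : Set ℕ) : ℕ →. ℕ :=
  fun n => Part.some
    (if n % 2 = 0 then ((f (n / 2).unpair.1 (n / 2).unpair.2 : Fin 2) : ℕ)
     else if n / 2 ∈ A then 1 else 0)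

/-!
Since `f` is stable and every `x ∈ H_L` gets colour `c` with the infinitely many elements of
`H_R` above it, `lim_u f x u = c` for all `x ∈ H_L`: the set `H_L` is limit homogeneous. Thinning
`H_L` greedily (keep `x` iff `f y x = c` for every smaller kept `y`) then yields an infinite
homogeneous set, since once finitely many elements are kept, every large enough `x ∈ H_L` is kept
as well. Whether `x` is kept depends only on the values of `f ⊕ (H_L ⊕ H_R)` below a computable
bound in `x`, so the thinned set is computable from that oracle, hence from any `X` computing
`f`, `H_L` and `H_R`.
-/

namespace OCode

def ofCode : Nat.Partrec.Code → OCode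
  | .zero => .zero
  | .succ => .succ
  | .left => .left
  | .right => .right
  | .pair a b => .pair (ofCode a) (ofCode b)
  | .comp a b => .comp (ofCode a) (ofCode b)
  | .prec a b => .prec (ofCode a) (ofCode b)
  | .rfind' a => .rfind' (ofCode a)

theorem eval_ofCode (O : ℕ →. ℕ) : ∀ c : Nat.Partrec.Code, eval O (ofCode c) = c.eval
  | .zero => rfl
  | .succ => rfl
  | .left => rfl
  | .right => rfl
  | .pair a b => by
    simp [ofCode, eval, Nat.Partrec.Code.eval, eval_ofCode O a, eval_ofCode O b]; rfl
  | .comp a b => by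
    simp [ofCode, eval, Nat.Partrec.Code.eval, eval_ofCode O a, eval_ofCode O b]; rfl
  | .prec a b => by
    simp [ofCode, eval, Nat.Partrec.Code.eval, eval_ofCode O a, eval_ofCode O b]; rfl
  | .rfind' a => by simp [ofCode, eval, Nat.Partrec.Code.eval, eval_ofCode O a]; rfl

def subst (o : OCode) : OCode → OCode
  | .zero => .zero
  | .succ => .succ
  | .left => .left
  | .right => .right
  | .oracle => o
  | .pair a b => .pair (subst o a) (subst o b)
  | .comp a b => .comp (subst o a) (subst o b)
  | .prec a b => .prec (subst o a) (subst o b)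
  | .rfind' a => .rfind' (subst o a)

theorem eval_subst {O O' : ℕ →. ℕ} {o : OCode} (ho : eval O o = O') :
    ∀ c : OCode, eval O (subst o c) = eval O' c
  | .zero => rfl
  | .succ => rfl
  | .left => rfl
  | .right => rfl
  | .oracle => ho
  | .pair a b => by simp [subst, eval, eval_subst ho a, eval_subst ho b]; rfl
  | .comp a b => by simp [subst, eval, eval_subst ho a, eval_subst ho b]; rfl
  | .prec a b => by simp [subst, eval, eval_subst ho a, eval_subst ho b]; rfl
  | .rfind' a => by simp [subst, eval, eval_subst ho a]; rfl

end OCode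

namespace RecIn

theorem of_partrec {O g : ℕ →. ℕ} (hg : Nat.Partrec g) : RecIn O g := by
  obtain ⟨c, rfl⟩ := Nat.Partrec.Code.exists_code.1 hg
  exact ⟨OCode.ofCode c, OCode.eval_ofCode O c⟩

theorem trans {O O' g : ℕ →. ℕ} (hg : RecIn O' g) (hO' : RecIn O O') : RecIn O g := by
  obtain ⟨cg, rfl⟩ := hg
  obtain ⟨co, hco⟩ := hO'
  exact ⟨OCode.subst co cg, OCode.eval_subst hco cg⟩

end RecIn

def TotalRecIn (O : ℕ →. ℕ) (F : ℕ → ℕ) : Prop := RecIn O fun n => Part.some (F n)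

namespace TotalRecIn

variable {O : ℕ →. ℕ} {F G : ℕ → ℕ}

theorem oracle (F : ℕ → ℕ) : TotalRecIn (fun n => Part.some (F n)) F := ⟨.oracle, rfl⟩

theorem of_computable (hF : Computable F) : TotalRecIn O F :=
  RecIn.of_partrec (Partrec.nat_iff.1 hF)

theorem comp (hF : TotalRecIn O F) (hG : TotalRecIn O G) : TotalRecIn O fun n => F (G n) := by
  obtain ⟨cF, hcF⟩ := hF
  obtain ⟨cG, hcG⟩ := hG
  exact ⟨.comp cF cG, funext fun n => by simp [OCode.eval, hcF, hcG]⟩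

theorem pair (hF : TotalRecIn O F) (hG : TotalRecIn O G) :
    TotalRecIn O fun n => Nat.pair (F n) (G n) := by
  obtain ⟨cF, hcF⟩ := hF
  obtain ⟨cG, hcG⟩ := hG
  exact ⟨.pair cF cG, funext fun n => by simp [OCode.eval, hcF, hcG, Seq.seq]⟩

theorem comp₂ {g : ℕ → ℕ → ℕ} (hg : Computable₂ g) (hF : TotalRecIn O F)
    (hG : TotalRecIn O G) : TotalRecIn O fun n => g (F n) (G n) := by
  have hg' : TotalRecIn O fun p => g p.unpair.1 p.unpair.2 :=
    of_computable (hg.comp (Computable.fst.comp Computable.unpair)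
      (Computable.snd.comp Computable.unpair))
  simpa using hg'.comp (hF.pair hG)

theorem ite {P : ℕ → Prop} [DecidablePred P] (hP : PrimrecPred P) (hF : TotalRecIn O F)
    (hG : TotalRecIn O G) : TotalRecIn O fun n => if P n then F n else G n := by
  have hsel : Computable₂ fun (n v : ℕ) => if P n then v.unpair.1 else v.unpair.2 :=
    (Primrec.ite (hP.comp Primrec.fst) (Primrec.fst.comp (Primrec.unpair.comp Primrec.snd))
      (Primrec.snd.comp (Primrec.unpair.comp Primrec.snd))).to_comp
  simpa using comp₂ hsel (of_computable Computable.id) (hF.pair hG)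

theorem nat_rec (z : ℕ) {g : ℕ → ℕ} (hg : TotalRecIn O g) :
    TotalRecIn O fun k =>
      Nat.rec (motive := fun _ => ℕ) z (fun y acc => g (Nat.pair y acc)) k := by
  obtain ⟨cz, hcz⟩ : TotalRecIn O fun _ => z := of_computable (Computable.const z)
  obtain ⟨cg, hcg⟩ := hg
  obtain ⟨c0, hc0⟩ : TotalRecIn O fun k => Nat.pair 0 k :=
    of_computable (Primrec₂.natPair.comp (Primrec.const 0) Primrec.id).to_comp
  refine ⟨.comp (.prec cz (.comp cg .right)) c0, funext fun k => ?_⟩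
  induction k with
  | zero => simp [OCode.eval, hcz, hc0]
  | succ k ih => simp_all [OCode.eval]

theorem transcript (ov : ℕ → ℕ) :
    TotalRecIn (fun n => Part.some (ov n))
      fun k => Encodable.encode ((List.range k).map ov) := by
  let snoc : ℕ → ℕ → ℕ := fun t v =>
    Encodable.encode (((Encodable.decode (α := List ℕ) t).getD []) ++ [v])
  have hsnoc : Computable₂ snoc :=
    (Primrec.encode.comp (Primrec.list_concat.comp
      (Primrec.option_getD.comp (Primrec.decode.comp Primrec.fst) (Primrec.const []))
      Primrec.snd)).to_comp
  have hstep : TotalRecIn (fun n => Part.some (ov n)) fun p => snoc p.unpair.2 (ov p.unpair.1) :=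
    comp₂ hsnoc (of_computable (Computable.snd.comp Computable.unpair))
      ((oracle ov).comp (of_computable (Computable.fst.comp Computable.unpair)))
  convert nat_rec (Encodable.encode ([] : List ℕ)) hstep using 2 with k
  induction k with
  | zero => rfl
  | succ k ih =>
    simp only [List.range_succ, List.map_append, List.map_singleton] at ih ⊢
    rw [← ih]
    simp [snoc]

theorem of_bounded_use {ov F B : ℕ → ℕ} {G : ℕ → List ℕ → ℕ} (hG : Computable₂ G)
    (hB : Computable B) (hF : ∀ n, F n = G n ((List.range (B n)).map ov)) :
    TotalRecIn (fun n => Part.some (ov n)) F := by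
  have hG' : Computable₂ fun n t => G n ((Encodable.decode (α := List ℕ) t).getD []) :=
    hG.comp Computable.fst
      (Computable.option_getD (Computable.decode.comp Computable.snd) (Computable.const []))
  simpa [← hF] using
    comp₂ hG' (of_computable Computable.id) ((transcript ov).comp (of_computable hB))

end TotalRecIn

section Greedy

variable (p : ℕ → Prop) [DecidablePred p] (r : ℕ → ℕ → Prop) [DecidableRel r]

def greedyList : ℕ → List ℕ
  | 0 => []
  | n + 1 =>
    if p n ∧ ∀ y ∈ greedyList n, r y n then greedyList n ++ [n] else greedyList n

def greedySet : Set ℕ := {x | p x ∧ ∀ y ∈ greedyList p r x, r y x}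

instance : DecidablePred (· ∈ greedySet p r) := fun x =>
  inferInstanceAs (Decidable (p x ∧ ∀ y ∈ greedyList p r x, r y x))

variable {p r}

theorem mem_greedyList_succ {x n : ℕ} :
    x ∈ greedyList p r (n + 1) ↔ x ∈ greedyList p r n ∨ x = n ∧ n ∈ greedySet p r := by
  change x ∈ (if n ∈ greedySet p r then _ else _) ↔ _
  split_ifs with hn <;> simp [hn]

theorem mem_greedyList {x n : ℕ} : x ∈ greedyList p r n ↔ x < n ∧ x ∈ greedySet p r := by
  induction n with
  | zero => simp [greedyList]
  | succ n ih =>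
    rw [mem_greedyList_succ, ih]
    constructor
    · rintro (⟨hx, hS⟩ | ⟨rfl, hS⟩) <;> exact ⟨by omega, hS⟩
    · rintro ⟨hx, hS⟩
      rcases Nat.lt_succ_iff_lt_or_eq.1 hx with hx | rfl
      exacts [Or.inl ⟨hx, hS⟩, Or.inr ⟨rfl, hS⟩]

theorem mem_greedySet {x : ℕ} :
    x ∈ greedySet p r ↔ p x ∧ ∀ y ∈ greedySet p r, y < x → r y x := by
  change (p x ∧ ∀ y ∈ greedyList p r x, r y x) ↔ _
  simp only [mem_greedyList, and_imp]
  exact and_congr_right' (forall_congr' fun _ => Imp.swap)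

theorem greedySet_pairwise {x y : ℕ} (hx : x ∈ greedySet p r) (hy : y ∈ greedySet p r)
    (hxy : x < y) : r x y :=
  (mem_greedySet.1 hy).2 x hx hxy

theorem greedySet_infinite (hp : {x | p x}.Infinite)
    (hr : ∀ y, p y → ∀ᶠ u in Filter.atTop, r y u) : (greedySet p r).Infinite := by
  intro hfin
  have hlate : ∀ᶠ u in Filter.atTop, u ∉ greedySet p r ∧ ∀ y ∈ greedySet p r, r y u :=
    (hfin.bddAbove.elim fun m hm => Filter.eventually_gt_atTop m |>.mono
      fun u hu hmem => absurd hu (not_lt.2 (hm hmem))).and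
      (hfin.eventually_all.2 fun y hy => hr y (mem_greedySet.1 hy).1)
  obtain ⟨u, hpu, hu, hru⟩ :=
    ((Nat.frequently_atTop_iff_infinite.2 hp).and_eventually hlate).exists
  exact hu (mem_greedySet.2 ⟨hpu, fun y hy _ => hru y hy⟩)

theorem greedyList_congr {p' : ℕ → Prop} [DecidablePred p'] {r' : ℕ → ℕ → Prop}
    [DecidableRel r'] {n : ℕ} (hp : ∀ x < n, p x ↔ p' x)
    (hr : ∀ x < n, ∀ y < x, r y x ↔ r' y x) : greedyList p r n = greedyList p' r' n := by
  induction n with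
  | zero => rfl
  | succ n ih =>
    have ih := ih (fun x hx => hp x (by omega)) (fun x hx => hr x (by omega))
    have hcond : (∀ y ∈ greedyList p' r' n, r y n) ↔ ∀ y ∈ greedyList p' r' n, r' y n :=
      forall₂_congr fun y hy => hr n n.lt_succ_self y (mem_greedyList.1 hy).1
    rw [greedyList, greedyList, ih]
    exact if_congr (and_congr (hp n n.lt_succ_self) hcond) rfl rfl

theorem mem_greedySet_congr {p' : ℕ → Prop} [DecidablePred p'] {r' : ℕ → ℕ → Prop}
    [DecidableRel r'] {n : ℕ} (hp : ∀ x ≤ n, p x ↔ p' x)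
    (hr : ∀ x ≤ n, ∀ y < x, r y x ↔ r' y x) :
    n ∈ greedySet p r ↔ n ∈ greedySet p' r' := by
  change (p n ∧ ∀ y ∈ greedyList p r n, r y n) ↔
    (p' n ∧ ∀ y ∈ greedyList p' r' n, r' y n)
  rw [greedyList_congr (fun x hx => hp x hx.le) (fun x hx => hr x hx.le)]
  exact and_congr (hp n le_rfl)
    (forall₂_congr fun y hy => hr n le_rfl y (mem_greedyList.1 hy).1)

end Greedy

open Classical in
/-- `colorJoinOracle f A` is definitionally `fun n => Part.some (colorJoinVal f A n)`. -/
noncomputable def colorJoinVal (f : ℕ → ℕ → Fin 2) (A : Set ℕ) (n : ℕ) : ℕ :=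
  if n % 2 = 0 then ((f (n / 2).unpair.1 (n / 2).unpair.2 : Fin 2) : ℕ)
  else if n / 2 ∈ A then 1 else 0

section ColorJoin

variable (f : ℕ → ℕ → Fin 2) (A B : Set ℕ)

theorem colorJoinVal_color (y x : ℕ) : colorJoinVal f A (2 * Nat.pair y x) = f y x := by
  simp [colorJoinVal]

open Classical in
theorem colorJoinVal_setJoin_left (x : ℕ) :
    colorJoinVal f (setJoin A B) (4 * x + 1) = if x ∈ A then 1 else 0 := by
  have h1 : (4 * x + 1) % 2 ≠ 0 := by omega
  have h2 : (4 * x + 1) / 2 = 2 * x := by omega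
  simp [colorJoinVal, h1, h2, setJoin]

open Classical in
theorem colorJoinVal_setJoin_eq :
    colorJoinVal f (setJoin A B) = fun n =>
      if n % 2 = 0 then ((f (n / 2).unpair.1 (n / 2).unpair.2 : Fin 2) : ℕ)
      else if n / 2 % 2 = 0 then (if n / 4 ∈ A then 1 else 0)
      else (if n / 4 ∈ B then 1 else 0) := by
  funext n
  have h4 : n / 2 / 2 = n / 4 := by omega
  rcases Nat.mod_two_eq_zero_or_one (n / 2) with h | h <;> simp [colorJoinVal, setJoin, h, h4]

end ColorJoin

/-- The greedy thinning of the left half of a join `setJoin HL HR` against colour `d`, read off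
the values `g` of the oracle `colorJoinOracle f (setJoin HL HR)`. -/
def joinGreedySet (d : ℕ) (g : ℕ → ℕ) : Set ℕ :=
  greedySet (fun x => g (4 * x + 1) = 1) (fun y x => g (2 * Nat.pair y x) = d)

open Classical in
theorem joinGreedySet_colorJoinVal (f : ℕ → ℕ → Fin 2) (HL HR : Set ℕ) (c : Fin 2) :
    joinGreedySet c (colorJoinVal f (setJoin HL HR)) =
      greedySet (· ∈ HL) (fun y x => f y x = c) := by
  ext n
  refine mem_greedySet_congr (fun x _ => ?_) (fun x _ y _ => ?_)
  · by_cases hx : x ∈ HL <;> simp [colorJoinVal_setJoin_left, hx]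
  · rw [colorJoinVal_color, Fin.val_inj]

theorem primrecRel_mem_joinGreedySet (d : ℕ) :
    PrimrecRel fun (t : List ℕ) (n : ℕ) => n ∈ joinGreedySet d (t.getD · 0) := by
  open Primrec in
  have hcond : PrimrecPred fun q : List ℕ × ℕ × List ℕ =>
      q.1.getD (4 * q.2.1 + 1) 0 = 1 ∧
        ∀ y ∈ q.2.2, q.1.getD (2 * Nat.pair y q.2.1) 0 = d := by
    refine PrimrecPred.and ?_ ?_
    · exact Primrec.eq.comp ((list_getD 0).comp fst
        (succ.comp (nat_mul.comp (const 4) (fst.comp snd)))) (const 1)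
    · have hr : PrimrecRel fun (y : ℕ) (q : List ℕ × ℕ) =>
          q.1.getD (2 * Nat.pair y q.2) 0 = d :=
        Primrec.eq.comp ((list_getD 0).comp (fst.comp snd)
          (nat_mul.comp (const 2) (Primrec₂.natPair.comp fst (snd.comp snd)))) (const d)
      exact hr.forall_mem_list.comp (snd.comp snd) (fst.pair (fst.comp snd))
  have hlist : Primrec₂ fun (t : List ℕ) (n : ℕ) =>
      greedyList (fun x => t.getD (4 * x + 1) 0 = 1)
        (fun y x => t.getD (2 * Nat.pair y x) 0 = d) n := by
    refine (Primrec.nat_rec (const []) (Primrec.ite hcond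
      (list_concat.comp (snd.comp snd) (fst.comp snd)) (snd.comp snd)).to₂).of_eq fun t n => ?_
    induction n with
    | zero => rfl
    | succ n ih => simp only [greedyList, ← ih]
  exact (hcond.comp (fst.pair (snd.pair hlist))).of_eq fun _ => Iff.rfl

open Classical in
theorem recIn_chr_greedySet (f : ℕ → ℕ → Fin 2) (HL HR : Set ℕ) (c : Fin 2) :
    RecIn (colorJoinOracle f (setJoin HL HR))
      (chr (greedySet (· ∈ HL) (fun y x => f y x = c))) := by
  rw [← joinGreedySet_colorJoinVal f HL HR c]
  refine TotalRecIn.of_bounded_use (ov := colorJoinVal f (setJoin HL HR))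
    (B := fun n => 4 * ((n + 1) * (n + 1)))
    (G := fun n t => if n ∈ joinGreedySet c (t.getD · 0) then 1 else 0)
    ((Primrec.ite ((primrecRel_mem_joinGreedySet c).comp Primrec.snd Primrec.fst)
      (Primrec.const 1) (Primrec.const 0)).to_comp)
    (Primrec.to_comp <| Primrec.nat_mul.comp (Primrec.const 4)
      (Primrec.nat_mul.comp Primrec.succ Primrec.succ)) fun n => if_congr ?_ rfl rfl
  refine mem_greedySet_congr (fun x hx => ?_) (fun x hx y hy => ?_) <;> beta_reduce
  · simp [show 4 * x + 1 < 4 * ((n + 1) * (n + 1)) by nlinarith]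
  · have hpair : Nat.pair y x = x * x + y := by simp [Nat.pair, hy]
    simp [show 2 * Nat.pair y x < 4 * ((n + 1) * (n + 1)) by nlinarith]

open Classical in
theorem TotalRecIn.colorJoinVal_setJoin {O : ℕ →. ℕ} {f : ℕ → ℕ → Fin 2}
    {A B : Set ℕ} (hf : TotalRecIn O fun n => (f n.unpair.1 n.unpair.2 : ℕ))
    (hA : TotalRecIn O fun n => if n ∈ A then 1 else 0)
    (hB : TotalRecIn O fun n => if n ∈ B then 1 else 0) :
    TotalRecIn O (colorJoinVal f (setJoin A B)) := by
  have hdiv (k : ℕ) : TotalRecIn O fun n => n / k :=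
    of_computable (Primrec.nat_div.comp Primrec.id (Primrec.const k)).to_comp
  have hpar (k : ℕ) : PrimrecPred fun n : ℕ => n / k % 2 = 0 :=
    Primrec.eq.comp (Primrec.nat_mod.comp (Primrec.nat_div.comp Primrec.id (Primrec.const k))
      (Primrec.const 2)) (Primrec.const 0)
  rw [colorJoinVal_setJoin_eq]
  simpa using
    (hf.comp (hdiv 2)).ite (hpar 1) ((hA.comp (hdiv 4)).ite (hpar 2) (hB.comp (hdiv 4)))

theorem Filter.Eventually.eq_of_frequently {α β : Type*} {l : Filter α}
    {g : α → β} {b c : β} (hb : ∀ᶠ a in l, g a = b) (hc : ∃ᶠ a in l, g a = c) :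
    ∀ᶠ a in l, g a = c := by
  obtain ⟨a, hac, hab⟩ := (hc.and_eventually hb).exists
  exact hb.mono fun a' ha' => ha'.trans (hab.symm.trans hac)

theorem eventually_eq_of_pHomogeneous {f : ℕ → ℕ → Fin 2} {HL HR : Set ℕ} {c : Fin 2}
    (hstable : ∀ x : ℕ, ∃ j : Fin 2, ∃ N : ℕ, ∀ u, N ≤ u → f x u = j)
    (hR : HR.Infinite) (hphom : ∀ x ∈ HL, ∀ y ∈ HR, x ≠ y → f (min x y) (max x y) = c)
    {x : ℕ} (hx : x ∈ HL) :
    ∀ᶠ u in Filter.atTop, f x u = c := by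
  obtain ⟨j, hj⟩ := hstable x
  refine Filter.Eventually.eq_of_frequently (Filter.eventually_atTop.2 hj) ?_
  refine ((Nat.frequently_atTop_iff_infinite.2 hR).and_eventually
    (Filter.eventually_gt_atTop x)).mono fun u ⟨huR, hxu⟩ => ?_
  simpa [hxu.le] using hphom x hx u huR hxu.ne

/-- If a stable coloring `f` has an infinite p-homogeneous set `H_L ⊕ H_R`, then
`f ⊕ (H_L ⊕ H_R)` computes an infinite homogeneous set for `f`; in particular any oracle
computing `f` and a p-homogeneous set computes a homogeneous set. -/
theorem phomogeneous_computes_homogeneous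
    (f : ℕ → ℕ → Fin 2)
    (hstable : ∀ x : ℕ, ∃ j : Fin 2, ∃ N : ℕ, ∀ u, N ≤ u → f x u = j)
    (HL HR : Set ℕ) (hL : HL.Infinite) (hR : HR.Infinite) (c : Fin 2)
    (hphom : ∀ x ∈ HL, ∀ y ∈ HR, x ≠ y → f (min x y) (max x y) = c) :
    (∃ H : Set ℕ, H.Infinite ∧
      (∃ d : Fin 2, ∀ x ∈ H, ∀ y ∈ H, x < y → f x y = d) ∧
      RecIn (colorJoinOracle f (setJoin HL HR)) (chr H)) ∧
    (∀ X : Set ℕ,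
      RecIn (chr X) (fun n => Part.some ((f n.unpair.1 n.unpair.2 : Fin 2) : ℕ)) →
      TuringLE HL X → TuringLE HR X →
      ∃ H : Set ℕ, H.Infinite ∧
        (∃ d : Fin 2, ∀ x ∈ H, ∀ y ∈ H, x < y → f x y = d) ∧
        TuringLE H X) := by
  classical
  set H := greedySet (· ∈ HL) (fun y x => f y x = c)
  have hinf : H.Infinite :=
    greedySet_infinite hL fun _ hx => eventually_eq_of_pHomogeneous hstable hR hphom hx
  have hhom : ∃ d : Fin 2, ∀ x ∈ H, ∀ y ∈ H, x < y → f x y = d :=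
    ⟨c, fun _ hx _ hy => greedySet_pairwise hx hy⟩
  have hrec : RecIn (colorJoinOracle f (setJoin HL HR)) (chr H) := recIn_chr_greedySet f HL HR c
  refine ⟨⟨H, hinf, hhom, hrec⟩, fun X hfX hLX hRX => ⟨H, hinf, hhom, ?_⟩⟩
  exact hrec.trans (TotalRecIn.colorJoinVal_setJoin hfX hLX hRX)
end
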